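/- Assume the structural conditions F(x,y,z) = F(x,z,y) = F(x,Jy,Jz) hold for all x,y,z. Then the quasi-Kähler condition 𝔖_{x,y,z} F(x,y,z) = 0 for all x,y,z holds if and only if N(x,Jy) + N(y,Jx) + N(Jx,y) + N(Jy,x) = 0 for all x,y in V. -/

import Mathlib

/-!
Write `T x y z = g (N x y) z`, let `𝔖 T` be its cyclic sum and `D x y z` the pairing of
`N(x,Jy) + N(y,Jx) + N(Jx,y) + N(Jy,x)` with `z`. Symmetry and `J`-invariance of `T` in its last two
slots make `T a (J b) c` antisymmetric in `b, c`, and give two identities: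
`D x y z = 𝔖 T (Jx) y z + 𝔖 T (Jy) x z` and `D x z (Jy) + D y x (Jz) + D z y (Jx) = 2 𝔖 T x y z`.
The first gives one implication (with nondegeneracy of `g`), the second the other.
-/

namespace NordenTrilinear

variable {R V : Type*} [CommRing R] [AddCommGroup V] [Module R V]
  (T : V →ₗ[R] V →ₗ[R] V →ₗ[R] R) (J : V →ₗ[R] V)

def cyclicSum (x y z : V) : R := T x y z + T y z x + T z x y

def jDefect (x y z : V) : R := T x (J y) z + T y (J x) z + T (J x) y z + T (J y) x z

variable {T J}

theorem apply_J_apply_eq_neg_apply_apply_J (hJ2 : ∀ x, J (J x) = -x)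
    (hJT : ∀ x y z, T x (J y) (J z) = T x y z) (x y z : V) :
    T x (J y) z = -T x y (J z) := by
  have h := hJT x (J y) z
  rw [hJ2, map_neg, LinearMap.neg_apply] at h
  exact h.symm

theorem apply_J_apply_antisymm (hJ2 : ∀ x, J (J x) = -x) (hsymm : ∀ x y z, T x y z = T x z y)
    (hJT : ∀ x y z, T x (J y) (J z) = T x y z) (x y z : V) :
    T x (J y) z = -T x (J z) y := by
  rw [apply_J_apply_eq_neg_apply_apply_J hJ2 hJT, hsymm x y (J z)]

theorem jDefect_eq_cyclicSum_add_cyclicSum (hJ2 : ∀ x, J (J x) = -x)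
    (hsymm : ∀ x y z, T x y z = T x z y) (hJT : ∀ x y z, T x (J y) (J z) = T x y z)
    (x y z : V) :
    jDefect T J x y z = cyclicSum T (J x) y z + cyclicSum T (J y) x z := by
  unfold jDefect cyclicSum
  linear_combination hsymm x (J y) z + hsymm y (J x) z - hsymm z (J y) x
    - apply_J_apply_eq_neg_apply_apply_J hJ2 hJT z x y

theorem jDefect_apply_J (hsymm : ∀ x y z, T x y z = T x z y)
    (hJT : ∀ x y z, T x (J y) (J z) = T x y z) (x y z : V) :
    jDefect T J x z (J y) = T x z y + T z x y + T (J x) (J y) z + T (J z) (J y) x := by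
  unfold jDefect
  linear_combination hJT x z y + hJT z x y + hsymm (J x) z (J y) + hsymm (J z) x (J y)

theorem jDefect_cyclic_sum_eq_two_mul_cyclicSum (hJ2 : ∀ x, J (J x) = -x)
    (hsymm : ∀ x y z, T x y z = T x z y) (hJT : ∀ x y z, T x (J y) (J z) = T x y z)
    (x y z : V) :
    jDefect T J x z (J y) + jDefect T J y x (J z) + jDefect T J z y (J x) =
      2 * cyclicSum T x y z := by
  rw [jDefect_apply_J hsymm hJT, jDefect_apply_J hsymm hJT, jDefect_apply_J hsymm hJT]
  unfold cyclicSum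
  linear_combination hsymm x z y + hsymm y x z + hsymm z y x
    + apply_J_apply_antisymm hJ2 hsymm hJT (J x) y z
    + apply_J_apply_antisymm hJ2 hsymm hJT (J y) z x
    + apply_J_apply_antisymm hJ2 hsymm hJT (J z) x y

end NordenTrilinear

open NordenTrilinear

theorem stmt9_general
    (V : Type*) [AddCommGroup V] [Module ℝ V]
    (g : V →ₗ[ℝ] V →ₗ[ℝ] ℝ)
    (hgnd : ∀ x : V, (∀ y : V, g x y = 0) → x = 0)
    (J : V →ₗ[ℝ] V)
    (hJ2 : ∀ x : V, J (J x) = -x)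
    (N : V →ₗ[ℝ] V →ₗ[ℝ] V)
    (F : V → V → V → ℝ)
    (hF : ∀ x y z : V, F x y z = g (N x y) z)
    (hFsym : ∀ x y z : V, F x y z = F x z y)
    (hFJ : ∀ x y z : V, F x y z = F x (J y) (J z))
    :
    (∀ x y z : V, F x y z + F y z x + F z x y = 0)
    ↔
    (∀ x y : V, N x (J y) + N y (J x) + N (J x) y + N (J y) x = 0) := by
  obtain rfl : F = fun x y z => N.compr₂ g x y z := funext fun x => funext fun y => funext (hF x y)
  have hJT : ∀ x y z, N.compr₂ g x (J y) (J z) = N.compr₂ g x y z := fun x y z => (hFJ x y z).symm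
  have hD : ∀ x y z, g (N x (J y) + N y (J x) + N (J x) y + N (J y) x) z =
      jDefect (N.compr₂ g) J x y z := by
    intro x y z
    simp only [map_add, LinearMap.add_apply, jDefect, LinearMap.compr₂_apply]
  constructor
  · intro hS x y
    refine hgnd _ fun z => ?_
    rw [hD, jDefect_eq_cyclicSum_add_cyclicSum hJ2 hFsym hJT]
    simp only [cyclicSum, hS, add_zero]
  · intro hN x y z
    have h := jDefect_cyclic_sum_eq_two_mul_cyclicSum hJ2 hFsym hJT x y z
    simp only [← hD, hN, map_zero, LinearMap.zero_apply, add_zero] at h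
    exact (mul_eq_zero.mp h.symm).resolve_left two_ne_zero

theorem stmt9
    (V : Type*) [AddCommGroup V] [Module ℝ V] [FiniteDimensional ℝ V]
    (g : V →ₗ[ℝ] V →ₗ[ℝ] ℝ)
    (hgsymm : ∀ x y : V, g x y = g y x)
    (hgnd : ∀ x : V, (∀ y : V, g x y = 0) → x = 0)
    (J : V →ₗ[ℝ] V)
    (hJ2 : ∀ x : V, J (J x) = -x)
    (hJg : ∀ x y : V, g (J x) (J y) = -(g x y))
    (N : V →ₗ[ℝ] V →ₗ[ℝ] V)
    (F : V → V → V → ℝ)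
    (hF : ∀ x y z : V, F x y z = g (N x y) z)
    (hFsym : ∀ x y z : V, F x y z = F x z y)
    (hFJ : ∀ x y z : V, F x y z = F x (J y) (J z))
    :
    (∀ x y z : V, F x y z + F y z x + F z x y = 0)
    ↔
    (∀ x y : V, N x (J y) + N y (J x) + N (J x) y + N (J y) x = 0) :=
  stmt9_general V g hgnd J hJ2 N F hF hFsym hFJ
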